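/- arXiv:1707.01789 — 3 statements merged into one kernel-verified Lean document; each statement's English description precedes it below -/
import Mathlib

section
/- Let M, K be symmetric positive definite and Φ nonsingular with Φᵀ M Φ = I and Φᵀ K Φ = Ω², Ω diagonal positive. Then the internal damping matrix C_int = 2α M^{1/2}(M^{-1/2} K M^{-1/2})^{1/2} M^{1/2} satisfies Φᵀ C_int Φ = 2α Ω, i.e., the modal matrix diagonalizes C_int. -/
open Matrix

/-! With `S = M^{1/2}` and `T = (S⁻¹ K S⁻¹)^{1/2}`, the matrix `P := S Φ` is orthogonal, so
`Pᵀ T P` is positive semidefinite with square `Pᵀ T² P = Φᵀ K Φ = Ω²`. Uniqueness of positive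
semidefinite square roots gives `Pᵀ T P = Ω`, and `Φᵀ (S T S) Φ = Pᵀ T P`. -/

namespace Matrix

open scoped ComplexOrder

variable {ι : Type*} [Fintype ι] [DecidableEq ι]

theorem PosSemidef.eq_of_mul_self_eq_mul_self {𝕜 : Type*} [RCLike 𝕜] {A B : Matrix ι ι 𝕜}
    (hA : A.PosSemidef) (hB : B.PosSemidef) (h : A * A = B * B) : A = B :=
  open scoped MatrixOrder in (CFC.mul_self_eq_mul_self_iff A B hA.nonneg hB.nonneg).mp h

theorem conjTranspose_mul_mul_mul_conjTranspose_mul_mul {R : Type*} [Semiring R] [StarRing R]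
    {P : Matrix ι ι R} (hP : P * Pᴴ = 1) (A B : Matrix ι ι R) :
    Pᴴ * A * P * (Pᴴ * B * P) = Pᴴ * (A * B) * P := by
  calc Pᴴ * A * P * (Pᴴ * B * P) = Pᴴ * (A * (P * Pᴴ) * B) * P := by simp only [Matrix.mul_assoc]
    _ = Pᴴ * (A * B) * P := by rw [hP, Matrix.mul_one]

theorem PosSemidef.conjTranspose_mul_mul_eq_of_mul_self_eq {𝕜 : Type*} [RCLike 𝕜]
    {P T D : Matrix ι ι 𝕜} (hP : P * Pᴴ = 1) (hT : T.PosSemidef) (hD : D.PosSemidef)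
    (h : Pᴴ * (T * T) * P = D * D) : Pᴴ * T * P = D :=
  (hT.conjTranspose_mul_mul_same P).eq_of_mul_self_eq_mul_self hD <| by
    rw [conjTranspose_mul_mul_mul_conjTranspose_mul_mul hP, h]

end Matrix

theorem stmt_3_general {n : ℕ} (M K S T Φ : Matrix (Fin n) (Fin n) ℝ) (α : ℝ)
    (hS : S.PosDef) (hS2 : S * S = M)
    (hT : T.PosDef) (hT2 : T * T = S⁻¹ * K * S⁻¹)
    (ω : Fin n → ℝ) (hω : ∀ i, 0 < ω i)
    (h1 : Φᵀ * M * Φ = 1)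
    (h2 : Φᵀ * K * Φ = Matrix.diagonal (fun i => ω i ^ 2)) :
    Φᵀ * ((2 * α) • (S * T * S)) * Φ = (2 * α) • Matrix.diagonal ω := by
  have hSt : Sᵀ = S := hS.isHermitian.eq
  have hSdet : IsUnit S.det := (isUnit_iff_isUnit_det S).mp hS.isUnit
  have hPt : (S * Φ)ᴴ = Φᵀ * S := by
    rw [conjTranspose_eq_transpose_of_trivial, transpose_mul, hSt]
  have hP : S * Φ * (S * Φ)ᴴ = 1 := mul_eq_one_comm.mp <| by
    rw [hPt, ← h1, ← hS2]; simp only [Matrix.mul_assoc]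
  have hTT : (S * Φ)ᴴ * (T * T) * (S * Φ) = diagonal ω * diagonal ω := by
    rw [hT2, hPt, diagonal_mul_diagonal]
    simp only [← sq, ← h2]
    simp only [Matrix.mul_assoc, mul_nonsing_inv_cancel_left _ _ hSdet,
      nonsing_inv_mul_cancel_left _ _ hSdet]
  have hTΩ : (S * Φ)ᴴ * T * (S * Φ) = diagonal ω :=
    PosSemidef.conjTranspose_mul_mul_eq_of_mul_self_eq hP hT.posSemidef
      (posSemidef_diagonal_iff.mpr fun i => (hω i).le) hTT
  rw [← hTΩ, hPt, Matrix.mul_smul, Matrix.smul_mul]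
  simp only [Matrix.mul_assoc]

/-- The modal matrix `Φ` (with `Φᵀ M Φ = I`, `Φᵀ K Φ = Ω²`) diagonalizes the internal
damping matrix `C_int = 2α M^{1/2} (M^{-1/2} K M^{-1/2})^{1/2} M^{1/2}`:
`Φᵀ C_int Φ = 2α Ω`. -/
theorem stmt_3 {n : ℕ} (M K S T Φ : Matrix (Fin n) (Fin n) ℝ) (α : ℝ) (hα : 0 < α)
    (hM : M.PosDef) (hK : K.PosDef)
    (hS : S.PosDef) (hS2 : S * S = M)
    (hT : T.PosDef) (hT2 : T * T = S⁻¹ * K * S⁻¹)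
    (hΦ : IsUnit Φ.det) (ω : Fin n → ℝ) (hω : ∀ i, 0 < ω i)
    (h1 : Φᵀ * M * Φ = 1)
    (h2 : Φᵀ * K * Φ = Matrix.diagonal (fun i => ω i ^ 2)) :
    Φᵀ * ((2 * α) • (S * T * S)) * Φ = (2 * α) • Matrix.diagonal ω :=
  stmt_3_general M K S T Φ α hS hS2 hT hT2 ω hω h1 h2
end

section
/- (Tangential interpolation by one-sided projection) Let σ ∈ ℂ with σ²M + σC + K invertible and b ∈ ℂ^m, and suppose X_r ∈ ℂ^{n×r} has full column rank and the vector v = (σ²M + σC + K)^{-1}Eb lies in the column space of X_r. Assume σ²M_r + σC_r + K_r is invertible, where M_r = X_r*MX_r, C_r = X_r*CX_r, K_r = X_r*KX_r, E_r = X_r*E, H_r = HX_r. Then the reduced transfer function F_r(s) = H_r(s²M_r + sC_r + K_r)^{-1}E_r satisfies F_r(σ)b = F(σ)b, where F(s) = H(s²M + sC + K)^{-1}E. -/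
open Matrix

/-- Right tangential interpolation by one-sided (Galerkin) projection: if
`v = (σ²M + σC + K)⁻¹ E b` lies in the column space of `X_r`, then the reduced transfer
function interpolates the full one at `σ` along direction `b`: `F_r(σ) b = F(σ) b`. -/
theorem stmt_15 {n r m p : ℕ} (M C K : Matrix (Fin n) (Fin n) ℝ)
    (E : Matrix (Fin n) (Fin m) ℝ) (H : Matrix (Fin p) (Fin n) ℝ)
    (σ : ℂ) (b : Fin m → ℂ)
    (Xr : Matrix (Fin n) (Fin r) ℂ)
    (hrank : ∀ v : Fin r → ℂ, Xr.mulVec v = 0 → v = 0) :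
    let Mc := M.map (Complex.ofReal)
    let Cc := C.map (Complex.ofReal)
    let Kc := K.map (Complex.ofReal)
    let Ec := E.map (Complex.ofReal)
    let Hc := H.map (Complex.ofReal)
    let Mr := Xrᴴ * Mc * Xr
    let Cr := Xrᴴ * Cc * Xr
    let Kr := Xrᴴ * Kc * Xr
    let Er := Xrᴴ * Ec
    let Hr := Hc * Xr
    IsUnit (σ ^ 2 • Mc + σ • Cc + Kc).det →
    IsUnit (σ ^ 2 • Mr + σ • Cr + Kr).det →
    (∃ c : Fin r → ℂ, (σ ^ 2 • Mc + σ • Cc + Kc)⁻¹.mulVec (Ec.mulVec b) = Xr.mulVec c) →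
    (Hr * (σ ^ 2 • Mr + σ • Cr + Kr)⁻¹ * Er).mulVec b =
      (Hc * (σ ^ 2 • Mc + σ • Cc + Kc)⁻¹ * Ec).mulVec b := by
  intro Mc Cc Kc Ec Hc Mr Cr Kr Er Hr hA hAr hex
  obtain ⟨c, hc⟩ := hex
  set A := σ ^ 2 • Mc + σ • Cc + Kc with hAdef
  set Ar := σ ^ 2 • Mr + σ • Cr + Kr with hArdef
  have hArEq : Ar = Xrᴴ * A * Xr := by
    simp only [hArdef, hAdef, Mr, Cr, Kr, Matrix.mul_add, Matrix.add_mul,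
      Matrix.mul_smul, Matrix.smul_mul, Matrix.mul_assoc]
  -- A.mulVec (Xr.mulVec c) = Ec.mulVec b
  have hAv : A.mulVec (Xr.mulVec c) = Ec.mulVec b := by
    rw [← hc, Matrix.mulVec_mulVec, Matrix.mul_nonsing_inv _ hA, Matrix.one_mulVec]
  have hArc : Ar.mulVec c = Er.mulVec b := by
    rw [hArEq]
    calc (Xrᴴ * A * Xr).mulVec c = Xrᴴ.mulVec (A.mulVec (Xr.mulVec c)) := by
          rw [Matrix.mulVec_mulVec, Matrix.mulVec_mulVec]
      _ = Xrᴴ.mulVec (Ec.mulVec b) := by rw [hAv]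
      _ = Er.mulVec b := by rw [Matrix.mulVec_mulVec]
  have hcEq : Ar⁻¹.mulVec (Er.mulVec b) = c := by
    rw [← hArc, Matrix.mulVec_mulVec, Matrix.nonsing_inv_mul _ hAr, Matrix.one_mulVec]
  calc (Hr * Ar⁻¹ * Er).mulVec b
      = Hc.mulVec (Xr.mulVec (Ar⁻¹.mulVec (Er.mulVec b))) := by
        simp only [Hr, Matrix.mulVec_mulVec, Matrix.mul_assoc]
    _ = Hc.mulVec (Xr.mulVec c) := by rw [hcEq]
    _ = Hc.mulVec (A⁻¹.mulVec (Ec.mulVec b)) := by rw [hc]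
    _ = (Hc * A⁻¹ * Ec).mulVec b := by
        simp only [Matrix.mulVec_mulVec, Matrix.mul_assoc]
end

section
/- (Hermite interpolation by symmetric one-sided projection) In the setting of the previous statement, suppose additionally M, C, K, and hence M_r, C_r, K_r, are symmetric, H = Eᵀ (so H_r = E_rᵀ), σ is real, and v = (σ²M + σC + K)^{-1}Eb ∈ range(X_r) with X_r real. Then also bᵀF_r(σ) = bᵀF(σ) and bᵀF_r'(σ)b = bᵀF'(σ)b, where F'(s) = -H(s²M+sC+K)^{-1}(2sM + C)(s²M+sC+K)^{-1}E and analogously for F_r'. -/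
open Matrix

/-- Hermite interpolation by symmetric one-sided projection: for a symmetric system
(`M, C, K` symmetric, `H = Eᵀ`), real `σ`, and real basis `X_r` whose range contains
`v = (σ²M + σC + K)⁻¹ E b`, the one-sided projection enforces, in addition to right
tangential interpolation, the left tangential condition `bᵀ F_r(σ) = bᵀ F(σ)` and the
Hermite condition `bᵀ F_r'(σ) b = bᵀ F'(σ) b`. -/
theorem stmt_16 {n r m : ℕ} (M C K : Matrix (Fin n) (Fin n) ℝ)
    (hM : Mᵀ = M) (hC : Cᵀ = C) (hK : Kᵀ = K)
    (E : Matrix (Fin n) (Fin m) ℝ)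
    (σ : ℝ) (b : Fin m → ℝ)
    (Xr : Matrix (Fin n) (Fin r) ℝ)
    (hrank : ∀ v : Fin r → ℝ, Xr.mulVec v = 0 → v = 0) :
    let Mr := Xrᵀ * M * Xr
    let Cr := Xrᵀ * C * Xr
    let Kr := Xrᵀ * K * Xr
    let Er := Xrᵀ * E
    let P := σ ^ 2 • M + σ • C + K
    let Pr := σ ^ 2 • Mr + σ • Cr + Kr
    IsUnit P.det →
    IsUnit Pr.det →
    (∃ c : Fin r → ℝ, P⁻¹.mulVec (E.mulVec b) = Xr.mulVec c) →
    Matrix.vecMul b (Erᵀ * Pr⁻¹ * Er) = Matrix.vecMul b (Eᵀ * P⁻¹ * E) ∧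
    b ⬝ᵥ (-(Erᵀ * Pr⁻¹ * ((2 * σ) • Mr + Cr) * Pr⁻¹ * Er)).mulVec b =
      b ⬝ᵥ (-(Eᵀ * P⁻¹ * ((2 * σ) • M + C) * P⁻¹ * E)).mulVec b := by
  intro Mr Cr Kr Er P Pr hPdet hPrdet hv
  obtain ⟨c, hc⟩ := hv
  have hPsym : Pᵀ = P := by
    simp [P, transpose_add, transpose_smul, hM, hC, hK]
  have hPrEq : Pr = Xrᵀ * P * Xr := by
    simp only [Pr, P, Mr, Cr, Kr, Matrix.mul_add, Matrix.add_mul, Matrix.mul_smul,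
      Matrix.smul_mul]
  have hPrsym : Prᵀ = Pr := by
    rw [hPrEq]; simp [transpose_mul, hPsym, Matrix.mul_assoc]
  have hPinvsym : P⁻¹ᵀ = P⁻¹ := by rw [transpose_nonsing_inv, hPsym]
  have hPrinvsym : Pr⁻¹ᵀ = Pr⁻¹ := by rw [transpose_nonsing_inv, hPrsym]
  set v : Fin n → ℝ := P⁻¹.mulVec (E.mulVec b) with hvdef
  have hPv : P.mulVec v = E.mulVec b := by
    rw [hvdef, mulVec_mulVec, mul_nonsing_inv _ hPdet, one_mulVec]
  have hcEr : Pr.mulVec c = Er.mulVec b := by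
    have h1 : Pr.mulVec c = Xrᵀ.mulVec (P.mulVec (Xr.mulVec c)) := by
      rw [hPrEq, mulVec_mulVec, mulVec_mulVec]
    rw [h1, ← hc, hPv]
    simp only [Er, ← mulVec_mulVec]
  have hcinv : Pr⁻¹.mulVec (Er.mulVec b) = c := by
    rw [← hcEr, mulVec_mulVec, nonsing_inv_mul _ hPrdet, one_mulVec]
  constructor
  · have hsymA : (Erᵀ * Pr⁻¹ * Er)ᵀ = Erᵀ * Pr⁻¹ * Er := by
      simp [transpose_mul, hPrinvsym, Matrix.mul_assoc]
    have hsymB : (Eᵀ * P⁻¹ * E)ᵀ = Eᵀ * P⁻¹ * E := by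
      simp [transpose_mul, hPinvsym, Matrix.mul_assoc]
    have e1 : (Erᵀ * Pr⁻¹ * Er) *ᵥ b = Eᵀ *ᵥ v := by
      simp only [← mulVec_mulVec]
      rw [hcinv]
      show (Xrᵀ * E)ᵀ *ᵥ c = Eᵀ *ᵥ v
      rw [transpose_mul, transpose_transpose, ← mulVec_mulVec, ← hc]
    have e2 : (Eᵀ * P⁻¹ * E) *ᵥ b = Eᵀ *ᵥ v := by
      simp only [← mulVec_mulVec]
      try rw [← hvdef]
    calc Matrix.vecMul b (Erᵀ * Pr⁻¹ * Er)
        = (Erᵀ * Pr⁻¹ * Er)ᵀ *ᵥ b := (Matrix.mulVec_transpose _ _).symm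
      _ = Eᵀ *ᵥ v := by rw [hsymA, e1]
      _ = (Eᵀ * P⁻¹ * E)ᵀ *ᵥ b := by rw [hsymB, e2]
      _ = Matrix.vecMul b (Eᵀ * P⁻¹ * E) := Matrix.mulVec_transpose _ _
  · set Q : Matrix (Fin n) (Fin n) ℝ := (2 * σ) • M + C with hQdef
    have hQr : (2 * σ) • Mr + Cr = Xrᵀ * Q * Xr := by
      simp only [Q, Mr, Cr, Matrix.mul_add, Matrix.add_mul, Matrix.mul_smul, Matrix.smul_mul]
    have lhs : b ⬝ᵥ (Erᵀ * Pr⁻¹ * ((2 * σ) • Mr + Cr) * Pr⁻¹ * Er).mulVec b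
        = v ⬝ᵥ Q.mulVec v := by
      rw [hQr]
      simp only [← mulVec_mulVec]
      rw [hcinv, ← hc]
      rw [Matrix.dotProduct_mulVec, Matrix.vecMul_transpose,
        Matrix.dotProduct_mulVec]
      have h1 : Matrix.vecMul (Er.mulVec b) Pr⁻¹ = c := by
        rw [← Matrix.mulVec_transpose, hPrinvsym, hcinv]
      rw [h1, Matrix.dotProduct_mulVec, Matrix.vecMul_transpose, ← hc]
    have rhs : b ⬝ᵥ (Eᵀ * P⁻¹ * Q * P⁻¹ * E).mulVec b = v ⬝ᵥ Q.mulVec v := by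
      simp only [← mulVec_mulVec]
      try rw [← hvdef]
      rw [Matrix.dotProduct_mulVec, Matrix.vecMul_transpose, Matrix.dotProduct_mulVec,
        ← Matrix.mulVec_transpose, hPinvsym, ← hvdef]
    rw [Matrix.neg_mulVec, Matrix.neg_mulVec, dotProduct_neg, dotProduct_neg, lhs, rhs]
end
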